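/- arXiv:0705.4487 — 4 statements merged into one kernel-verified Lean document; each statement's English description precedes it below -/
import Mathlib

section
/- For every sequence (f_n)_{n≥1} of measurable real-valued functions on X with ∑_{n=1}^∞ ‖f_n‖_𝒬 < ∞, there exists a measurable function f: X → ℝ with ‖f‖_𝒬 < ∞ such that the partial sums ∑_{k=1}^n f_k converge to f μ-almost everywhere and ‖f − ∑_{k=1}^n f_k‖_𝒬 → 0 as n → ∞. Consequently, the space of (μ-equivalence classes of) measurable functions f with ‖f‖_𝒬 < ∞ is a Banach space under the norm ‖·‖_𝒬. -/
/-!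
Put `g := ∑' n, f n`. Pointwise, `‖g - ∑_{k<n} f k‖ ≤ ∑_{k ≥ n} ‖f k‖`, so integrating against
each `Q ∈ 𝒬` and interchanging sum and integral bounds `‖g - ∑_{k<n} f k‖_𝒬` by the tail
`∑_{k ≥ n} ‖f k‖_𝒬`, which tends to `0`.
For a.e. convergence, a single `Q₀ ∈ 𝒬` already gives `∑ ∫ ‖f n‖ dQ₀ < ∞`, so the series converges
absolutely `Q₀`-a.e., hence `μ`-a.e. because `μ ≪ Q₀`.
-/

open MeasureTheory Filter
open scoped ENNReal Topology

theorem enorm_tsum_sub_sum_range_le {E : Type*} [NormedAddCommGroup E] [CompleteSpace E]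
    (a : ℕ → E) (n : ℕ) :
    ‖∑' k, a k - ∑ k ∈ Finset.range n, a k‖ₑ ≤ ∑' k, ‖a (k + n)‖ₑ := by
  by_cases ha : Summable a
  · rw [← ha.sum_add_tsum_nat_add n, add_sub_cancel_left]
    exact enorm_tsum_le_tsum_enorm
  · -- `∑' k, a k` is the junk value `0` here, but the tail of norms is infinite.
    have htail : ∑' k, ‖a (k + n)‖ₑ = ∞ := by
      by_contra h
      exact ha ((summable_nat_add_iff n).1 (tsum_enorm_ne_top_iff_summable_norm.1 h).of_norm)
    simp [htail]

namespace MeasureTheory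

variable {X E : Type*} [MeasurableSpace X] [NormedAddCommGroup E]

noncomputable def supL1Norm (𝒬 : Set (Measure X)) (f : X → E) : ℝ≥0∞ :=
  ⨆ Q ∈ 𝒬, ∫⁻ x, ‖f x‖ₑ ∂Q

variable {𝒬 : Set (Measure X)} {f : ℕ → X → E}

theorem lintegral_enorm_le_supL1Norm {Q : Measure X} (hQ : Q ∈ 𝒬) (g : X → E) :
    ∫⁻ x, ‖g x‖ₑ ∂Q ≤ supL1Norm 𝒬 g :=
  le_biSup (fun Q => ∫⁻ x, ‖g x‖ₑ ∂Q) hQ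

variable [CompleteSpace E]

theorem supL1Norm_tsum_sub_sum_range_le (hf : ∀ n, StronglyMeasurable (f n)) (n : ℕ) :
    supL1Norm 𝒬 (fun x => ∑' k, f k x - ∑ k ∈ Finset.range n, f k x) ≤
      ∑' k, supL1Norm 𝒬 (f (k + n)) := by
  refine iSup₂_le fun Q hQ => ?_
  calc ∫⁻ x, ‖∑' k, f k x - ∑ k ∈ Finset.range n, f k x‖ₑ ∂Q
      ≤ ∫⁻ x, ∑' k, ‖f (k + n) x‖ₑ ∂Q :=
        lintegral_mono fun x => enorm_tsum_sub_sum_range_le (fun k => f k x) n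
    _ = ∑' k, ∫⁻ x, ‖f (k + n) x‖ₑ ∂Q :=
        lintegral_tsum fun k => (hf (k + n)).aestronglyMeasurable.enorm
    _ ≤ ∑' k, supL1Norm 𝒬 (f (k + n)) :=
        ENNReal.tsum_le_tsum fun k => lintegral_enorm_le_supL1Norm hQ _

theorem tendsto_supL1Norm_tsum_sub_sum_range (hf : ∀ n, StronglyMeasurable (f n))
    (hsum : ∑' n, supL1Norm 𝒬 (f n) ≠ ∞) :
    Tendsto (fun n => supL1Norm 𝒬 (fun x => ∑' k, f k x - ∑ k ∈ Finset.range n, f k x))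
      atTop (𝓝 0) :=
  tendsto_of_tendsto_of_tendsto_of_le_of_le tendsto_const_nhds
    (ENNReal.tendsto_sum_nat_add _ hsum) (fun _ => zero_le)
    (supL1Norm_tsum_sub_sum_range_le hf)

theorem ae_summable_of_tsum_supL1Norm_ne_top (hf : ∀ n, StronglyMeasurable (f n))
    {Q : Measure X} (hQ : Q ∈ 𝒬) (hsum : ∑' n, supL1Norm 𝒬 (f n) ≠ ∞) :
    ∀ᵐ x ∂Q, Summable fun n => f n x := by
  have hQsum : ∑' n, eLpNorm (f n) 1 Q ≠ ∞ := by
    refine ne_top_of_le_ne_top hsum (ENNReal.tsum_le_tsum fun n => ?_)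
    rw [eLpNorm_one_eq_lintegral_enorm]
    exact lintegral_enorm_le_supL1Norm hQ _
  filter_upwards [summable_norm_of_tsum_eLpNorm_ne_top le_rfl
    (fun n => (hf n).aestronglyMeasurable) hQsum] with x hx using hx.of_norm

end MeasureTheory

theorem banach_space_of_sup_norm_general
    {X : Type*} [MeasurableSpace X] (μ : Measure X)
    (𝒬 : Set (Measure X)) (h_ne : 𝒬.Nonempty)
    (h_equiv : ∀ Q ∈ 𝒬, Q ≪ μ ∧ μ ≪ Q)
    (f : ℕ → X → ℝ) (hf : ∀ n, Measurable (f n))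
    (hsum : (∑' n, ⨆ Q ∈ 𝒬, ∫⁻ x, ENNReal.ofReal |f n x| ∂Q) ≠ ⊤) :
    ∃ g : X → ℝ, Measurable g ∧
      (⨆ Q ∈ 𝒬, ∫⁻ x, ENNReal.ofReal |g x| ∂Q) ≠ ⊤ ∧
      (∀ᵐ x ∂μ, Tendsto (fun n => ∑ k ∈ Finset.range n, f k x) atTop (nhds (g x))) ∧
      Tendsto (fun n => ⨆ Q ∈ 𝒬, ∫⁻ x, ENNReal.ofReal |g x - ∑ k ∈ Finset.range n, f k x| ∂Q)
        atTop (nhds 0) := by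
  simp only [← Real.enorm_eq_ofReal_abs] at hsum ⊢
  change ∑' n, supL1Norm 𝒬 (f n) ≠ ∞ at hsum
  have hf' : ∀ n, StronglyMeasurable (f n) := fun n => (hf n).stronglyMeasurable
  obtain ⟨Q₀, hQ₀⟩ := h_ne
  have hg_norm : supL1Norm 𝒬 (fun x => ∑' n, f n x) ≠ ∞ := by
    simpa using ne_top_of_le_ne_top hsum (supL1Norm_tsum_sub_sum_range_le hf' 0)
  refine ⟨fun x => ∑' n, f n x, Measurable.tsum hf, hg_norm, ?_,
    tendsto_supL1Norm_tsum_sub_sum_range hf' hsum⟩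
  filter_upwards [(h_equiv Q₀ hQ₀).2 (ae_summable_of_tsum_supL1Norm_ne_top hf' hQ₀ hsum)]
    with x hx using hx.hasSum.tendsto_sum_nat

/-- Abstract form of Proposition 3.3: with `‖f‖_𝒬 = sup_{Q ∈ 𝒬} ∫ |f| dQ`, any sequence of
measurable functions whose norms are summable has measurable partial-sum limit `g` with
`‖g‖_𝒬 < ∞`, the partial sums converge to `g` μ-a.e., and `‖g − ∑_{k<n} f_k‖_𝒬 → 0`.
Consequently the space of such functions is a Banach space under `‖·‖_𝒬`. -/
theorem banach_space_of_sup_norm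
    {X : Type*} [MeasurableSpace X] (μ : Measure X) [IsProbabilityMeasure μ]
    (𝒬 : Set (Measure X)) (h_ne : 𝒬.Nonempty)
    (h_prob : ∀ Q ∈ 𝒬, IsProbabilityMeasure Q)
    (h_equiv : ∀ Q ∈ 𝒬, Q ≪ μ ∧ μ ≪ Q)
    (f : ℕ → X → ℝ) (hf : ∀ n, Measurable (f n))
    (hsum : (∑' n, ⨆ Q ∈ 𝒬, ∫⁻ x, ENNReal.ofReal |f n x| ∂Q) ≠ ⊤) :
    ∃ g : X → ℝ, Measurable g ∧
      (⨆ Q ∈ 𝒬, ∫⁻ x, ENNReal.ofReal |g x| ∂Q) ≠ ⊤ ∧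
      (∀ᵐ x ∂μ, Tendsto (fun n => ∑ k ∈ Finset.range n, f k x) atTop (nhds (g x))) ∧
      Tendsto (fun n => ⨆ Q ∈ 𝒬, ∫⁻ x, ENNReal.ofReal |g x - ∑ k ∈ Finset.range n, f k x| ∂Q)
        atTop (nhds 0) :=
  banach_space_of_sup_norm_general μ 𝒬 h_ne h_equiv f hf hsum
end

section
/- For every nonnegative progressively measurable process c: [0,T]×Ω → [0,∞], the following identity holds (as an equality of values in [0,∞]): ∫_Ω (∫_{(0,T]} c_t(ω) dκ_t(ω)) dQ(ω) = ∫_Ω (∫_{(0,T]} c_t(ω) Y_t(ω) dκ_t(ω)) dP(ω), where for each ω the inner integrals are taken with respect to the Lebesgue–Stieltjes measure on (0,T] induced by the nondecreasing right-continuous path t ↦ κ_t(ω). -/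
/-!
Let `σ_s = inf {t ∈ [0, T] | s ≤ κ_t}` be the right-continuous inverse of the clock. Pathwise, the
Lebesgue–Stieltjes measure `dκ` on `(0, T]` is the image of Lebesgue measure on `(0, κ_T]` under
`s ↦ σ_s`, so `∫_{(0,T]} c_t dκ_t = ∫_0^∞ 1{s ≤ κ_T} c_{σ_s} ds`. By right-continuity of `κ`,
`{σ_s ≤ t} = {s ≤ κ_t}`, so every `σ_s` is a stopping time and `1{s ≤ κ_T} c_{σ_s}` is
`ℱ_{σ_s}`-measurable. Optional sampling for the right-continuous martingale `Y` gives
`Y_{σ_s} = E[Z | ℱ_{σ_s}]`, hence `E[Z 1{s ≤ κ_T} c_{σ_s}] = E[Y_{σ_s} 1{s ≤ κ_T} c_{σ_s}]` for each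
`s`, and Tonelli in `(s, ω)` concludes. Optional sampling at `σ_s` follows from the countable-range
case at the dyadic approximations of `σ_s` from above: `Y` is right-continuous, and the conditional
expectations of `Z` are uniformly integrable, so their limit is again a conditional expectation.
-/

open MeasureTheory Filter Set

open scoped ENNReal Topology

noncomputable def dyadicCeil (n : ℕ) (x : ℝ) : ℝ := ⌈x * 2 ^ n⌉ / 2 ^ n

lemma le_dyadicCeil (n : ℕ) (x : ℝ) : x ≤ dyadicCeil n x := by
  rw [dyadicCeil, le_div_iff₀ (by positivity)]
  exact Int.le_ceil _

lemma dyadicCeil_le_add (n : ℕ) (x : ℝ) : dyadicCeil n x ≤ x + (2 ^ n)⁻¹ := by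
  rw [dyadicCeil, div_le_iff₀ (by positivity), add_mul, inv_mul_cancel₀ (by positivity)]
  exact (Int.ceil_lt_add_one _).le

lemma dyadicCeil_le_iff (n : ℕ) (x t : ℝ) :
    dyadicCeil n x ≤ t ↔ x ≤ ⌊t * 2 ^ n⌋ / 2 ^ n := by
  rw [dyadicCeil, div_le_iff₀ (by positivity), le_div_iff₀ (by positivity), ← Int.le_floor,
    Int.ceil_le]

lemma countable_range_dyadicCeil (n : ℕ) : (range (dyadicCeil n)).Countable :=
  (countable_range fun k : ℤ => (k : ℝ) / 2 ^ n).mono <| by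
    rintro _ ⟨x, rfl⟩
    exact ⟨_, rfl⟩

lemma tendsto_min_dyadicCeil {x T : ℝ} (hxT : x ≤ T) :
    Tendsto (fun n => min (dyadicCeil n x) T) atTop (𝓝[≥] x) := by
  have h_inv : Tendsto (fun n : ℕ => ((2 : ℝ) ^ n)⁻¹) atTop (𝓝 0) := by
    simpa only [inv_pow] using
      tendsto_pow_atTop_nhds_zero_of_lt_one (r := (2 : ℝ)⁻¹) (by norm_num) (by norm_num)
  have h_lim : Tendsto (fun n => dyadicCeil n x) atTop (𝓝 x) :=
    tendsto_of_tendsto_of_tendsto_of_le_of_le tendsto_const_nhds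
      (by simpa using tendsto_const_nhds.add h_inv) (le_dyadicCeil · x) (dyadicCeil_le_add · x)
  refine tendsto_nhdsWithin_of_tendsto_nhds_of_eventually_within _ ?_
    (Eventually.of_forall fun n => le_min (le_dyadicCeil n x) hxT)
  simpa [min_eq_left hxT] using h_lim.min (tendsto_const_nhds (x := T))

section Progressive

variable {Ω β : Type*} {m0 : MeasurableSpace Ω} {ℱ : Filtration ℝ m0}

theorem MeasureTheory.Adapted.isStronglyProgressive_of_rightContinuous [TopologicalSpace β]
    [TopologicalSpace.PseudoMetrizableSpace β] [SecondCountableTopology β] [MeasurableSpace β]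
    [BorelSpace β] {X : ℝ → Ω → β} (hX : Adapted ℱ X)
    (hrc : ∀ ω t, ContinuousWithinAt (X · ω) (Ici t) t) :
    IsStronglyProgressive ℱ X := by
  intro i
  let : MeasurableSpace Ω := ℱ i
  -- capping the dyadic times at `i` keeps the approximations `ℱ i`-measurable
  have h_approx : ∀ n, Measurable fun p : Iic i × Ω => X (min (dyadicCeil n p.1) i) p.2 := by
    intro n
    have h_grid : Measurable fun q : ℤ × Ω => X (min (q.1 / 2 ^ n) i) q.2 :=
      measurable_from_prod_countable_right fun k =>
        (hX (min (k / 2 ^ n) i)).mono (ℱ.mono (min_le_right _ _)) le_rfl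
    have h_ceil : Measurable fun t : Iic i => ⌈(t : ℝ) * 2 ^ n⌉ :=
      Int.measurable_ceil.comp (measurable_subtype_coe.mul_const _)
    exact h_grid.comp (h_ceil.prodMap measurable_id)
  refine stronglyMeasurable_of_tendsto atTop (fun n => (h_approx n).stronglyMeasurable) ?_
  refine tendsto_pi_nhds.mpr fun p => (hrc p.2 p.1).tendsto.comp ?_
  exact tendsto_min_dyadicCeil p.1.2

theorem MeasureTheory.IsStronglyProgressive.measurable_comp {α ι : Type*} [MeasurableSpace α]
    [MeasurableSpace ι] [Preorder ι] [TopologicalSpace β]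
    [TopologicalSpace.PseudoMetrizableSpace β] [MeasurableSpace β] [BorelSpace β]
    {ℱ : Filtration ι m0} {X : ι → Ω → β} (hX : IsStronglyProgressive ℱ X) {T : ι}
    {τ : α → ι} {π : α → Ω} (hτ : Measurable τ) (hπ : Measurable π) (hτT : ∀ a, τ a ≤ T) :
    Measurable fun a => X (τ a) (π a) :=
  ((hX T).measurable.mono (sup_le_sup le_rfl (MeasurableSpace.comap_mono (ℱ.le T))) le_rfl).comp
    ((hτ.subtype_mk (p := (· ∈ Iic T)) (h := hτT)).prodMk hπ)

end Progressive

section OptionalSampling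

variable {Ω : Type*} {m0 : MeasurableSpace Ω} {P : Measure Ω} {ℱ : Filtration ℝ m0}

theorem MeasureTheory.IsStoppingTime.min_dyadicCeil {τ : Ω → ℝ}
    (hτ : IsStoppingTime ℱ fun ω => (τ ω : WithTop ℝ)) (n : ℕ) (T : ℝ) :
    IsStoppingTime ℱ fun ω => ((min (dyadicCeil n (τ ω)) T : ℝ) : WithTop ℝ) := by
  have h_ceil : IsStoppingTime ℱ fun ω => ((dyadicCeil n (τ ω) : ℝ) : WithTop ℝ) := by
    intro t
    simp only [WithTop.coe_le_coe, dyadicCeil_le_iff]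
    refine ℱ.mono ?_ _ (by simpa only [WithTop.coe_le_coe] using hτ (⌊t * 2 ^ n⌋ / 2 ^ n))
    rw [div_le_iff₀ (by positivity)]
    exact Int.floor_le _
  simpa only [WithTop.coe_min] using h_ceil.min_const T

theorem stoppedValue_ae_eq_condExp_of_countable_range [IsFiniteMeasure P] {Z : Ω → ℝ} {T : ℝ}
    {Y : ℝ → Ω → ℝ} (hY : ∀ t ∈ Icc 0 T, Y t =ᵐ[P] P[Z | ℱ t]) {τ : Ω → ℝ}
    (hτ : IsStoppingTime ℱ fun ω => (τ ω : WithTop ℝ)) (hτ_mem : ∀ ω, τ ω ∈ Icc 0 T)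
    (hτ_range : (range τ).Countable) :
    (fun ω => Y (τ ω) ω) =ᵐ[P] P[Z | hτ.measurableSpace] := by
  have hτ_le : ∀ ω, (τ ω : WithTop ℝ) ≤ T := fun ω => WithTop.coe_le_coe.2 (hτ_mem ω).2
  have h_sample : stoppedValue (fun t => P[Z | ℱ t]) (fun ω => (τ ω : WithTop ℝ))
      =ᵐ[P] P[P[Z | ℱ T] | hτ.measurableSpace] :=
    (martingale_condExp Z ℱ P).stoppedValue_ae_eq_condExp_of_le_const_of_countable_range hτ
      hτ_le (by simpa only [range_comp'] using hτ_range.image _)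
  have h_tower : P[P[Z | ℱ T] | hτ.measurableSpace] =ᵐ[P] P[Z | hτ.measurableSpace] :=
    condExp_condExp_of_le (hτ.measurableSpace_le_of_le_const hτ_le) (ℱ.le T)
  have h_version : ∀ᵐ ω ∂P, ∀ t ∈ range τ, Y t ω = P[Z | ℱ t] ω :=
    (ae_ball_iff hτ_range).2 fun _ ⟨ω, hω⟩ => hω ▸ hY _ (hτ_mem ω)
  refine EventuallyEq.trans ?_ (h_sample.trans h_tower)
  filter_upwards [h_version] with ω hω using hω _ (mem_range_self ω)

theorem ae_eq_condExp_of_tendsto_condExp [IsFiniteMeasure P] {Z : Ω → ℝ} (hZ : Integrable Z P)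
    {m : MeasurableSpace Ω} {ℱs : ℕ → MeasurableSpace Ω} (hℱs : ∀ n, ℱs n ≤ m0)
    (hm : ∀ n, m ≤ ℱs n) {V : Ω → ℝ} (hV : StronglyMeasurable[m] V)
    (hlim : ∀ᵐ ω ∂P, Tendsto (fun n => P[Z | ℱs n] ω) atTop (𝓝 (V ω))) :
    V =ᵐ[P] P[Z | m] := by
  have hUI := hZ.uniformIntegrable_condExp hℱs
  have hV_int : Integrable V P := hUI.integrable_of_ae_tendsto hlim
  -- Vitali: uniform integrability upgrades the a.e. convergence to convergence in `L¹`
  have hL1 : Tendsto (fun n => eLpNorm (P[Z | ℱs n] - V) 1 P) atTop (𝓝 0) :=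
    tendsto_Lp_finite_of_tendsto_ae le_rfl ENNReal.one_ne_top hUI.1
      (memLp_one_iff_integrable.2 hV_int) hUI.2.1 hlim
  refine ae_eq_condExp_of_forall_setIntegral_eq ((hm 0).trans (hℱs 0)) hZ
    (fun _ _ _ => hV_int.integrableOn) (fun s hs _ => ?_) hV.aestronglyMeasurable
  refine tendsto_nhds_unique (tendsto_setIntegral_of_L1' V hV_int.1
    (Eventually.of_forall fun _ => integrable_condExp) hL1 s) ?_
  simp only [setIntegral_condExp (hℱs _) hZ (hm _ s hs), tendsto_const_nhds]

theorem stoppedValue_ae_eq_condExp_of_rightContinuous [IsFiniteMeasure P] {Z : Ω → ℝ}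
    (hZ : Integrable Z P) {T : ℝ} {Y : ℝ → Ω → ℝ} (hY_adapted : Adapted ℱ Y)
    (hY_rc : ∀ ω t, ContinuousWithinAt (Y · ω) (Ici t) t)
    (hY : ∀ t ∈ Icc 0 T, Y t =ᵐ[P] P[Z | ℱ t]) {τ : Ω → ℝ}
    (hτ : IsStoppingTime ℱ fun ω => (τ ω : WithTop ℝ)) (hτ_mem : ∀ ω, τ ω ∈ Icc 0 T) :
    (fun ω => Y (τ ω) ω) =ᵐ[P] P[Z | hτ.measurableSpace] := by
  set τn : ℕ → Ω → ℝ := fun n ω => min (dyadicCeil n (τ ω)) T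
  have hτn : ∀ n, IsStoppingTime ℱ fun ω => (τn n ω : WithTop ℝ) :=
    fun n => hτ.min_dyadicCeil n T
  have hτ_le_τn : ∀ n ω, τ ω ≤ τn n ω :=
    fun n ω => le_min (le_dyadicCeil n _) (hτ_mem ω).2
  have hτn_mem : ∀ n ω, τn n ω ∈ Icc 0 T :=
    fun n ω => ⟨(hτ_mem ω).1.trans (hτ_le_τn n ω), min_le_right _ _⟩
  have hτn_range : ∀ n, (range (τn n)).Countable := fun n =>
    ((countable_range_dyadicCeil n).image (min · T)).mono <| by
      rintro _ ⟨ω, rfl⟩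
      exact ⟨_, mem_range_self _, rfl⟩
  have h_sampled : ∀ᵐ ω ∂P, ∀ n, Y (τn n ω) ω = P[Z | (hτn n).measurableSpace] ω :=
    ae_all_iff.2 fun n =>
      stoppedValue_ae_eq_condExp_of_countable_range hY (hτn n) (hτn_mem n) (hτn_range n)
  refine ae_eq_condExp_of_tendsto_condExp hZ (fun n => (hτn n).measurableSpace_le)
    (fun n => hτ.measurableSpace_mono (hτn n) fun ω => WithTop.coe_le_coe.2 (hτ_le_τn n ω))
    (measurable_stoppedValue (hY_adapted.isStronglyProgressive_of_rightContinuous hY_rc)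
      hτ).stronglyMeasurable ?_
  filter_upwards [h_sampled] with ω hω
  simp only [← hω]
  exact (hY_rc ω (τ ω)).tendsto.comp (tendsto_min_dyadicCeil (hτ_mem ω).2)

end OptionalSampling

theorem lintegral_condLExp_mul {Ω : Type*} {m m0 : MeasurableSpace Ω} {P : Measure[m0] Ω}
    (hm : m ≤ m0) [SigmaFinite (P.trim hm)] {X g : Ω → ℝ≥0∞} (hX : Measurable X)
    (hg : Measurable[m] g) :
    ∫⁻ ω, P⁻[X | m] ω * g ω ∂P = ∫⁻ ω, X ω * g ω ∂P := by
  have h_trim : (P.withDensity P⁻[X | m]).trim hm = (P.withDensity X).trim hm := by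
    refine @Measure.ext _ m _ _ fun s hs => ?_
    rw [trim_measurableSet_eq hm hs, trim_measurableSet_eq hm hs, withDensity_apply _ (hm s hs),
      withDensity_apply _ (hm s hs), setLIntegral_condLExp hm P X hs]
  calc ∫⁻ ω, P⁻[X | m] ω * g ω ∂P
      = ∫⁻ ω, g ω ∂((P.withDensity P⁻[X | m]).trim hm) := by
        rw [lintegral_trim hm hg, lintegral_withDensity_eq_lintegral_mul _
          (measurable_condLExp' m P X) (hg.mono hm le_rfl)]
        rfl
    _ = ∫⁻ ω, X ω * g ω ∂P := by
        rw [h_trim, lintegral_trim hm hg,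
          lintegral_withDensity_eq_lintegral_mul _ hX (hg.mono hm le_rfl)]
        rfl

section Hitting

variable {Ω ι β : Type*} [ConditionallyCompleteLinearOrder ι] [TopologicalSpace ι]
  [OrderTopology ι] {u : ι → Ω → β} {n m t : ι} {ω : Ω}

theorem MeasureTheory.hittingBtwn_mem_set_of_continuousWithinAt [TopologicalSpace β]
    {s : Set β} (hs : IsClosed s)
    (hu : ContinuousWithinAt (u · ω) (Ici (hittingBtwn u s n m ω)) (hittingBtwn u s n m ω))
    (h_exists : ∃ j ∈ Icc n m, u j ω ∈ s) :
    u (hittingBtwn u s n m ω) ω ∈ s := by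
  classical
  set A := Icc n m ∩ {i | u i ω ∈ s}
  have hA_bdd : BddBelow A := bddBelow_Icc.inter_of_left
  have h_eq : hittingBtwn u s n m ω = sInf A := by simp only [hittingBtwn, if_pos h_exists, A]
  rw [h_eq] at hu ⊢
  obtain ⟨j, hj, hjs⟩ := h_exists
  have h_closure := (hu.mono fun i hi => csInf_le hA_bdd hi).mem_closure_image
    (csInf_mem_closure ⟨j, hj, hjs⟩ hA_bdd)
  exact hs.closure_subset_iff.2 (image_subset_iff.2 fun i hi => hi.2) h_closure

variable [Preorder β] [TopologicalSpace β] [ClosedIciTopology β]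

theorem MeasureTheory.hittingBtwn_Ici_le_iff {a : β} (hmono : Monotone (u · ω))
    (hrc : ∀ t, ContinuousWithinAt (u · ω) (Ici t) t) (ht : t ∈ Icc n m)
    (h : t < m ∨ a ≤ u m ω) :
    hittingBtwn u (Ici a) n m ω ≤ t ↔ a ≤ u t ω := by
  refine ⟨fun h_le => ?_, fun ha => hittingBtwn_le_of_mem ht.1 ht.2 ha⟩
  by_cases h_exists : ∃ j ∈ Icc n m, u j ω ∈ Ici a
  · exact (hittingBtwn_mem_set_of_continuousWithinAt isClosed_Ici (hrc _) h_exists).trans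
      (hmono h_le)
  · classical
    have h_end : hittingBtwn u (Ici a) n m ω = m := by simp only [hittingBtwn, if_neg h_exists]
    have htm : t = m := le_antisymm ht.2 (h_end ▸ h_le)
    rcases h with h | h
    · exact absurd htm h.ne
    · exact absurd ⟨m, ⟨ht.1.trans ht.2, le_rfl⟩, h⟩ h_exists

theorem MeasureTheory.Adapted.isStoppingTime_hittingBtwn_Ici [MeasurableSpace β]
    [OpensMeasurableSpace β] {m0 : MeasurableSpace Ω} {ℱ : Filtration ι m0}
    (hu : Adapted ℱ u) (hmono : ∀ ω, Monotone (u · ω))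
    (hrc : ∀ ω t, ContinuousWithinAt (u · ω) (Ici t) t) (a : β) (hnm : n ≤ m) :
    IsStoppingTime ℱ fun ω => ((hittingBtwn u (Ici a) n m ω : ι) : WithTop ι) := by
  intro t
  simp only [WithTop.coe_le_coe]
  rcases lt_or_ge t n with htn | hnt
  · convert @MeasurableSet.empty _ (ℱ t)
    exact eq_empty_of_forall_notMem fun ω hω => (le_hittingBtwn hnm ω).not_gt (hω.trans_lt htn)
  rcases lt_or_ge t m with htm | hmt
  · convert hu t measurableSet_Ici using 1
    ext ω
    exact hittingBtwn_Ici_le_iff (hmono _) (hrc _) ⟨hnt, htm.le⟩ (Or.inl htm)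
  · convert @MeasurableSet.univ _ (ℱ t)
    exact eq_univ_of_forall fun ω => (hittingBtwn_le ω).trans hmt

end Hitting

theorem MeasureTheory.measurable_hittingBtwn_Ici {Ω : Type*} [MeasurableSpace Ω]
    {u : ℝ → Ω → ℝ} (hu : ∀ t, Measurable (u t)) (hmono : ∀ ω, Monotone (u · ω)) (n m : ℝ) :
    Measurable fun p : ℝ × Ω => hittingBtwn u (Ici p.1) n m p.2 := by
  refine measurable_of_Iio fun r => ?_
  rcases lt_or_ge m r with hmr | hrm
  · convert MeasurableSet.univ
    exact eq_univ_of_forall fun p => (hittingBtwn_le p.2).trans_lt hmr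
  -- by monotonicity of the paths, reaching the level before `r` is decided at rational times
  have h_eq : (fun p : ℝ × Ω => hittingBtwn u (Ici p.1) n m p.2) ⁻¹' Iio r
      = ⋃ q : ℚ, ⋃ (_ : n < q ∧ (q : ℝ) < r), {p | p.1 ≤ u q p.2} := by
    ext p
    simp only [mem_preimage, mem_Iio, hittingBtwn_lt_iff r hrm, mem_Ico, mem_Ici, mem_iUnion,
      mem_ofPred_eq, exists_prop]
    constructor
    · rintro ⟨j, ⟨hnj, hjr⟩, hj⟩
      obtain ⟨q, hjq, hqr⟩ := exists_rat_btwn hjr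
      exact ⟨q, ⟨hnj.trans_lt hjq, hqr⟩, hj.trans (hmono p.2 hjq.le)⟩
    · rintro ⟨q, ⟨hnq, hqr⟩, hq⟩
      exact ⟨q, ⟨hnq.le, hqr⟩, hq⟩
  rw [h_eq]
  exact .iUnion fun q => .iUnion fun _ =>
    measurableSet_le measurable_fst ((hu q).comp measurable_snd)

theorem MeasureTheory.IsStoppingTime.measurableSet_of_lt_subset {Ω ι : Type*} [LinearOrder ι]
    {m0 : MeasurableSpace Ω} {ℱ : Filtration ι m0} {τ : Ω → WithTop ι}
    (hτ : IsStoppingTime ℱ τ) {A : Set Ω} {i : ι} (hA : MeasurableSet[ℱ i] A)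
    (h_sub : {ω | τ ω < i} ⊆ A) :
    MeasurableSet[hτ.measurableSpace] A := by
  refine ⟨le_iSup ℱ i _ hA, fun t => ?_⟩
  rcases le_or_gt i t with hit | hti
  · exact (ℱ.mono hit _ hA).inter (hτ t)
  · have h_le_sub : {ω | τ ω ≤ t} ⊆ A :=
      fun ω hω => h_sub (hω.trans_lt (WithTop.coe_lt_coe.2 hti))
    rw [inter_eq_right.2 h_le_sub]
    exact hτ t

theorem StieltjesFunction.map_restrict_Ioc_eq (f : StieltjesFunction ℝ) {a b : ℝ}
    {φ : ℝ → ℝ} (hφ : Measurable φ)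
    (h_inv : ∀ s ∈ Ioc (f a) (f b), ∀ t ∈ Icc a b, φ s ≤ t ↔ s ≤ f t) :
    (volume.restrict (Ioc (f a) (f b))).map φ = f.measure.restrict (Ioc a b) := by
  refine Measure.ext_of_Iic _ _ fun x => ?_
  have h_le_iff : ∀ s ∈ Ioc (f a) (f b), φ s ≤ x ↔ s ≤ f (min b x) := by
    intro s hs
    have hab : a < b := f.mono.reflect_lt (hs.1.trans_le hs.2)
    have h_le_b : φ s ≤ b := (h_inv s hs b ⟨hab.le, le_rfl⟩).2 hs.2
    rcases le_or_gt a x with hax | hxa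
    · rw [← h_inv s hs _ ⟨le_min hab.le hax, min_le_left _ _⟩, le_min_iff]
      exact (and_iff_right h_le_b).symm
    · have h_gt_a : a < φ s :=
        lt_of_not_ge fun h => hs.1.not_ge ((h_inv s hs a ⟨le_rfl, hab.le⟩).1 h)
      exact iff_of_false (hxa.trans h_gt_a).not_ge
        (hs.1.trans_le' (f.mono ((min_le_right _ _).trans hxa.le))).not_ge
  have h_preimage : φ ⁻¹' Iic x ∩ Ioc (f a) (f b) = Ioc (f a) (f (min b x)) := by
    ext s
    refine ⟨fun ⟨hsx, hs⟩ => ⟨hs.1, (h_le_iff s hs).1 hsx⟩, fun hs => ?_⟩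
    have hs' : s ∈ Ioc (f a) (f b) := ⟨hs.1, hs.2.trans (f.mono (min_le_left _ _))⟩
    exact ⟨(h_le_iff s hs').2 hs.2, hs'⟩
  rw [Measure.map_apply hφ measurableSet_Iic, Measure.restrict_apply (hφ measurableSet_Iic),
    h_preimage, Real.volume_Ioc, Measure.restrict_apply measurableSet_Iic, inter_comm,
    Ioc_inter_Iic, f.measure_Ioc]

section TimeChange

variable {Ω : Type*} {m0 : MeasurableSpace Ω}

/-- `hittingBtwn κ (Ici s) 0 T ω` is the right-continuous inverse `inf {t ∈ [0, T] | s ≤ κ_t}` of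
the clock; it takes the junk value `T` when the level `s` is not reached, which the `if`
discards. -/
noncomputable def timeChange (κ : ℝ → Ω → ℝ) (T : ℝ) (X : ℝ → Ω → ℝ≥0∞) (s : ℝ) (ω : Ω) :
    ℝ≥0∞ :=
  if s ≤ κ T ω then X (hittingBtwn κ (Ici s) 0 T ω) ω else 0

theorem setLIntegral_stieltjes_eq_setLIntegral_timeChange {κ : ℝ → Ω → ℝ} {T : ℝ} {ω : Ω}
    (hmono : Monotone (κ · ω)) (hrc : ∀ t, ContinuousWithinAt (κ · ω) (Ici t) t)
    (hκ0 : κ 0 ω = 0) {X : ℝ → Ω → ℝ≥0∞} (hX : Measurable fun t => X (min t T) ω) :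
    ∫⁻ t in Ioc 0 T, X t ω ∂(⟨(κ · ω), hmono, hrc⟩ : StieltjesFunction ℝ).measure
      = ∫⁻ s in Ioi 0, timeChange κ T X s ω := by
  set f : StieltjesFunction ℝ := ⟨(κ · ω), hmono, hrc⟩
  set φ := fun s => hittingBtwn κ (Ici s) 0 T ω
  have hφ : Measurable φ := ((hittingBtwn_apply_anti κ 0 T ω).comp antitone_Ici).measurable
  have h_map : (volume.restrict (Ioc (f 0) (f T))).map φ = f.measure.restrict (Ioc 0 T) :=
    f.map_restrict_Ioc_eq hφ fun s hs t ht => hittingBtwn_Ici_le_iff hmono hrc ht (Or.inr hs.2)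
  calc ∫⁻ t in Ioc 0 T, X t ω ∂f.measure
      = ∫⁻ t in Ioc 0 T, X (min t T) ω ∂f.measure :=
        setLIntegral_congr_fun measurableSet_Ioc fun t ht => by rw [min_eq_left ht.2]
    _ = ∫⁻ s in Ioc 0 (κ T ω), X (φ s) ω := by
        rw [← h_map, lintegral_map hX hφ]
        simp only [f, hκ0]
        exact lintegral_congr fun s => by rw [min_eq_left (hittingBtwn_le ω)]
    _ = ∫⁻ s in Ioi 0, timeChange κ T X s ω := by
        rw [← Ioi_inter_Iic, inter_comm, ← Measure.restrict_restrict measurableSet_Iic,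
          ← lintegral_indicator measurableSet_Iic]
        simp only [indicator_apply, mem_Iic, timeChange, φ]

variable {ℱ : Filtration ℝ m0} {κ : ℝ → Ω → ℝ} {T : ℝ} {X : ℝ → Ω → ℝ≥0∞}

theorem measurable_timeChange (hκ : Adapted ℱ κ) (hmono : ∀ ω, Monotone (κ · ω))
    (hX : IsStronglyProgressive ℱ X) :
    Measurable fun p : ℝ × Ω => timeChange κ T X p.1 p.2 := by
  have hκ_meas : ∀ t, Measurable (κ t) := fun t => (hκ t).mono (ℱ.le t) le_rfl
  exact Measurable.ite (measurableSet_le measurable_fst ((hκ_meas T).comp measurable_snd))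
    (hX.measurable_comp (measurable_hittingBtwn_Ici hκ_meas hmono 0 T) measurable_snd
      fun p => hittingBtwn_le p.2) measurable_const

theorem measurable_timeChange_apply (hκ : Adapted ℱ κ) (hmono : ∀ ω, Monotone (κ · ω))
    (hX : IsStronglyProgressive ℱ X) {s : ℝ}
    (hσ : IsStoppingTime ℱ fun ω => ((hittingBtwn κ (Ici s) 0 T ω : ℝ) : WithTop ℝ)) :
    Measurable[hσ.measurableSpace] (timeChange κ T X s) := by
  have h_reached : MeasurableSet[hσ.measurableSpace] {ω | s ≤ κ T ω} :=
    hσ.measurableSet_of_lt_subset (hκ T measurableSet_Ici) fun ω hω => by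
      obtain ⟨j, hj, hsj⟩ := (hittingBtwn_lt_iff T le_rfl).1 (WithTop.coe_lt_coe.1 hω)
      exact hsj.trans (hmono ω hj.2.le)
  exact Measurable.ite h_reached (measurable_stoppedValue hX hσ) measurable_const

theorem lintegral_ofReal_mul_timeChange {P : Measure Ω} [IsFiniteMeasure P] {Z : Ω → ℝ}
    (hZ_meas : Measurable Z) (hZ_nonneg : ∀ ω, 0 ≤ Z ω) (hZ : Integrable Z P) (hT : 0 ≤ T)
    {Y : ℝ → Ω → ℝ} (hY_adapted : Adapted ℱ Y)
    (hY_rc : ∀ ω t, ContinuousWithinAt (Y · ω) (Ici t) t)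
    (hY_mart : ∀ t ∈ Icc 0 T, Y t =ᵐ[P] P[Z | ℱ t]) (hκ : Adapted ℱ κ)
    (hmono : ∀ ω, Monotone (κ · ω)) (hrc : ∀ ω t, ContinuousWithinAt (κ · ω) (Ici t) t)
    {c : ℝ → Ω → ℝ≥0∞} (hc : IsStronglyProgressive ℱ c) (s : ℝ) :
    ∫⁻ ω, ENNReal.ofReal (Z ω) * timeChange κ T c s ω ∂P
      = ∫⁻ ω, timeChange κ T (fun t ω => c t ω * ENNReal.ofReal (Y t ω)) s ω ∂P := by
  have hσ := hκ.isStoppingTime_hittingBtwn_Ici hmono hrc s hT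
  have h_cond := condLExp_ofReal hσ.measurableSpace hZ (ae_of_all _ hZ_nonneg)
  have h_sample := stoppedValue_ae_eq_condExp_of_rightContinuous hZ hY_adapted hY_rc hY_mart hσ
    fun ω => hittingBtwn_mem_Icc hT ω
  rw [← lintegral_condLExp_mul hσ.measurableSpace_le hZ_meas.ennreal_ofReal
    (measurable_timeChange_apply hκ hmono hc hσ)]
  refine lintegral_congr_ae ?_
  filter_upwards [h_cond, h_sample] with ω h_cond h_sample
  rw [h_cond, ← h_sample]
  unfold timeChange
  split_ifs <;> ring

end TimeChange

theorem lintegral_stieltjes_density_martingale_general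
    {Ω : Type*} {m0 : MeasurableSpace Ω} (P : Measure Ω) [IsProbabilityMeasure P]
    (T : ℝ) (hT : 0 < T)
    (ℱ : Filtration ℝ m0)
    -- the absolutely continuous measure `Q` with density `Z = dQ/dP`
    (Q : Measure Ω) [IsFiniteMeasure Q]
    (Z : Ω → ℝ) (hZ_meas : Measurable Z) (hZ_nonneg : ∀ ω, 0 ≤ Z ω)
    (hQ : Q = P.withDensity fun ω => ENNReal.ofReal (Z ω))
    -- the càdlàg version `Y` of the density martingale
    (Y : ℝ → Ω → ℝ) (hY_adapted : Adapted ℱ Y)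
    (hY_rc : ∀ ω t, ContinuousWithinAt (fun s => Y s ω) (Set.Ici t) t)
    (hY_mart : ∀ t ∈ Set.Icc (0 : ℝ) T, Y t =ᵐ[P] P[Z | ℱ t])
    -- the clock `κ`: adapted, paths nondecreasing, right-continuous and starting at `0`
    (κ : ℝ → Ω → ℝ) (hκ_adapted : Adapted ℱ κ)
    (hκ_mono : ∀ ω, Monotone fun t => κ t ω)
    (hκ_rc : ∀ ω t, ContinuousWithinAt (fun s => κ s ω) (Set.Ici t) t)
    (hκ_zero : ∀ ω, κ 0 ω = 0)
    -- a nonnegative progressively measurable process `c`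
    (c : ℝ → Ω → ENNReal) (hc : ProgMeasurable ℱ c) :
    ∫⁻ ω, (∫⁻ t in Set.Ioc (0 : ℝ) T, c t ω
        ∂((⟨fun t => κ t ω, hκ_mono ω, hκ_rc ω⟩ : StieltjesFunction ℝ).measure)) ∂Q
      = ∫⁻ ω, (∫⁻ t in Set.Ioc (0 : ℝ) T, c t ω * ENNReal.ofReal (Y t ω)
        ∂((⟨fun t => κ t ω, hκ_mono ω, hκ_rc ω⟩ : StieltjesFunction ℝ).measure)) ∂P := by
  have hZ_fin : ∀ᵐ ω ∂P, ENNReal.ofReal (Z ω) < ∞ := ae_of_all _ fun _ => ENNReal.ofReal_lt_top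
  have hZ : Integrable Z P := by
    have h := (integrable_withDensity_iff hZ_meas.ennreal_ofReal hZ_fin).1
      (hQ ▸ integrable_const (μ := Q) (1 : ℝ))
    simpa only [one_mul, ENNReal.toReal_ofReal (hZ_nonneg _)] using h
  have hY_prog := hY_adapted.isStronglyProgressive_of_rightContinuous hY_rc
  have hcY : IsStronglyProgressive ℱ fun t ω => c t ω * ENNReal.ofReal (Y t ω) := fun t =>
    ((hc t).measurable.mul (hY_prog t).measurable.ennreal_ofReal).stronglyMeasurable
  have h_time : ∀ {X : ℝ → Ω → ℝ≥0∞}, IsStronglyProgressive ℱ X → ∀ ω,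
      ∫⁻ t in Ioc 0 T, X t ω ∂(⟨(κ · ω), hκ_mono ω, hκ_rc ω⟩ : StieltjesFunction ℝ).measure
        = ∫⁻ s in Ioi 0, timeChange κ T X s ω := fun hX ω =>
    setLIntegral_stieltjes_eq_setLIntegral_timeChange (hκ_mono ω) (hκ_rc ω) (hκ_zero ω)
      (hX.measurable_comp (measurable_id.min measurable_const) measurable_const (min_le_right · T))
  have h_meas := measurable_timeChange hκ_adapted hκ_mono (T := T) hc
  calc _ = ∫⁻ ω, (∫⁻ s in Ioi 0, ENNReal.ofReal (Z ω) * timeChange κ T c s ω) ∂P := by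
        rw [hQ, lintegral_withDensity_eq_lintegral_mul_non_measurable _ hZ_meas.ennreal_ofReal
          hZ_fin]
        refine lintegral_congr fun ω => ?_
        rw [Pi.mul_apply, h_time hc]
        exact (lintegral_const_mul _ (h_meas.comp measurable_prodMk_right)).symm
    _ = ∫⁻ s in Ioi 0, ∫⁻ ω, ENNReal.ofReal (Z ω) * timeChange κ T c s ω ∂P :=
        lintegral_lintegral_swap (((hZ_meas.comp measurable_snd).ennreal_ofReal.mul h_meas).comp
          measurable_swap).aemeasurable
    _ = ∫⁻ s in Ioi 0, ∫⁻ ω, timeChange κ T (fun t ω => c t ω * ENNReal.ofReal (Y t ω)) s ω ∂P := by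
        simp only [lintegral_ofReal_mul_timeChange hZ_meas hZ_nonneg hZ hT.le hY_adapted hY_rc
          hY_mart hκ_adapted hκ_mono hκ_rc hc]
    _ = _ := by
        rw [lintegral_lintegral_swap (measurable_timeChange hκ_adapted hκ_mono hcY).aemeasurable]
        simp only [h_time hcY]

/-- Proposition 3.2 of the paper: if `Q ≪ P` has density `Z`, `Y` is the càdlàg version of the
density martingale `Y_t = E[Z | ℱ_t]`, and `κ` is an adapted, nondecreasing, right-continuous
process started at `0`, then for every nonnegative progressively measurable process `c`,
`∫_Ω (∫_{(0,T]} c_t dκ_t) dQ = ∫_Ω (∫_{(0,T]} c_t Y_t dκ_t) dP`, the inner integrals being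
taken with respect to the Lebesgue–Stieltjes measures of the paths `t ↦ κ_t(ω)`. -/
theorem lintegral_stieltjes_density_martingale
    {Ω : Type*} {m0 : MeasurableSpace Ω} (P : Measure Ω) [IsProbabilityMeasure P]
    (T : ℝ) (hT : 0 < T)
    (ℱ : Filtration ℝ m0)
    -- usual conditions: right-continuity of the filtration and completeness
    (h_right : ∀ t ∈ Set.Ico (0 : ℝ) T, ℱ t = ⨅ s : {s : ℝ // t < s}, ℱ (s : ℝ))
    (h_complete : ∀ N : Set Ω, P N = 0 → MeasurableSet[ℱ 0] N)
    -- the absolutely continuous measure `Q` with density `Z = dQ/dP`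
    (Q : Measure Ω) [IsFiniteMeasure Q]
    (Z : Ω → ℝ) (hZ_meas : Measurable Z) (hZ_nonneg : ∀ ω, 0 ≤ Z ω)
    (hQ : Q = P.withDensity fun ω => ENNReal.ofReal (Z ω))
    -- the càdlàg version `Y` of the density martingale
    (Y : ℝ → Ω → ℝ) (hY_adapted : Adapted ℱ Y)
    (hY_nonneg : ∀ t ω, 0 ≤ Y t ω)
    (hY_rc : ∀ ω t, ContinuousWithinAt (fun s => Y s ω) (Set.Ici t) t)
    (hY_ll : ∀ ω t, ∃ l : ℝ, Tendsto (fun s => Y s ω) (nhdsWithin t (Set.Iio t)) (nhds l))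
    (hY_mart : ∀ t ∈ Set.Icc (0 : ℝ) T, Y t =ᵐ[P] P[Z | ℱ t])
    -- the clock `κ`: adapted, paths nondecreasing, right-continuous and starting at `0`
    (κ : ℝ → Ω → ℝ) (hκ_adapted : Adapted ℱ κ)
    (hκ_mono : ∀ ω, Monotone fun t => κ t ω)
    (hκ_rc : ∀ ω t, ContinuousWithinAt (fun s => κ s ω) (Set.Ici t) t)
    (hκ_zero : ∀ ω, κ 0 ω = 0)
    -- a nonnegative progressively measurable process `c`
    (c : ℝ → Ω → ENNReal) (hc : ProgMeasurable ℱ c) :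
    ∫⁻ ω, (∫⁻ t in Set.Ioc (0 : ℝ) T, c t ω
        ∂((⟨fun t => κ t ω, hκ_mono ω, hκ_rc ω⟩ : StieltjesFunction ℝ).measure)) ∂Q
      = ∫⁻ ω, (∫⁻ t in Set.Ioc (0 : ℝ) T, c t ω * ENNReal.ofReal (Y t ω)
        ∂((⟨fun t => κ t ω, hκ_mono ω, hκ_rc ω⟩ : StieltjesFunction ℝ).measure)) ∂P :=
  lintegral_stieltjes_density_martingale_general P T hT ℱ Q Z hZ_meas hZ_nonneg hQ Y hY_adapted
    hY_rc hY_mart κ hκ_adapted hκ_mono hκ_rc hκ_zero c hc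
end

section
/- Suppose Λ is a positive continuous linear functional on L∞(ν) (i.e. Λ(f) ≥ 0 whenever f ≥ 0 ν-a.e.) that decomposes as Λ = Λ_r + Λ_s, where Λ_r(f) = ∫_X f Y dν for some ν-integrable function Y ≥ 0, and Λ_s is a positive continuous linear functional with the singularity property: for every ε > 0 there exists A ∈ Σ with ν(X∖A) < ε and Λ_s(f·1_A) = 0 for all f ∈ L∞(ν). Then sup_c ( 𝐔(c) − Λ(c) ) = sup_c ( 𝐔(c) − Λ_r(c) ), where both suprema are taken over all bounded measurable functions c: X → (0,∞). -/
/-!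
Since `Λ_s ≥ 0`, `Λ(c) ≥ Λ_r(c)` for every admissible `c`, which gives `≤`. Conversely, given `c`
and `δ ∈ (0,1)`, let `d = c` on a set `A` of almost full measure on which `Λ_s` vanishes and
`d = δ c` off `A` (admissible functions are positive, so `c` cannot simply be cut off). Then
`Λ_s(d) = δ Λ_s(c)` and `Λ_r(d) ≤ Λ_r(c)`, while the utility lost is `∫_{Aᶜ} (U(c) - U(δc)) dν`:
by Assumption 2.3 and monotonicity of `U` the integrand is integrable, so the loss is small once
`ν(Aᶜ)` is. Choosing `δ` first and then `A` makes `𝐔(d) - Λ(d)` as close to `𝐔(c) - Λ_r(c)` as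
we like.
-/

open MeasureTheory

/-- The utility functional `𝐔(c) = ∫ U(x, c(x)) dν`, as an extended-real number, with the
convention that the value is `−∞` (`⊥`) whenever the integral of the negative part is
infinite (in `EReal`, `⊤ - ⊤ = ⊥`, so the subtraction below implements this convention). -/
noncomputable def utilityFunctional {X : Type*} [MeasurableSpace X] (ν : Measure X)
    (U : X → ℝ → ℝ) (c : X → ℝ) : EReal :=
  ((∫⁻ x, ENNReal.ofReal (U x (c x)) ∂ν : ENNReal) : EReal) -
    ((∫⁻ x, ENNReal.ofReal (-(U x (c x))) ∂ν : ENNReal) : EReal)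

open Filter Topology

open scoped ENNReal

section Integrability

variable {X : Type*} [MeasurableSpace X] {ν : Measure X}

lemma enorm_eq_ofReal_add_ofReal_neg (a : ℝ) :
    ‖a‖ₑ = ENNReal.ofReal a + ENNReal.ofReal (-a) := by
  rcases le_total 0 a with h | h
  · rw [ENNReal.ofReal_of_nonpos (neg_nonpos.2 h), add_zero, Real.enorm_of_nonneg h]
  · rw [ENNReal.ofReal_of_nonpos h, zero_add, Real.enorm_eq_ofReal_abs, abs_of_nonpos h]

lemma integrable_of_lintegral_ofReal_ne_top {f : X → ℝ} (hf : AEMeasurable f ν)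
    (hpos : ∫⁻ x, ENNReal.ofReal (f x) ∂ν ≠ ∞) (hneg : ∫⁻ x, ENNReal.ofReal (-f x) ∂ν ≠ ∞) :
    Integrable f ν := by
  refine ⟨hf.aestronglyMeasurable, ?_⟩
  rw [hasFiniteIntegral_iff_enorm]
  simp_rw [enorm_eq_ofReal_add_ofReal_neg]
  rw [lintegral_add_left' hf.ennreal_ofReal]
  exact ENNReal.add_lt_top.2 ⟨hpos.lt_top, hneg.lt_top⟩

lemma Integrable.exists_pos_forall_setIntegral_lt {f : X → ℝ} (hf : Integrable f ν) {η : ℝ}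
    (hη : 0 < η) : ∃ ε : ℝ, 0 < ε ∧ ∀ s, ν s < ENNReal.ofReal ε → ∫ x in s, f x ∂ν < η := by
  have h := (hf.tendsto_setIntegral_nhds_zero (l := comap ν (𝓝 0)) (s := id)
    tendsto_comap).eventually (gt_mem_nhds hη)
  obtain ⟨t, ht, hts⟩ := mem_comap.1 h
  obtain ⟨ε', hε', hε't⟩ := ENNReal.nhds_zero_basis.mem_iff.1 ht
  obtain ⟨ε, -, hε, hεε'⟩ := ENNReal.lt_iff_exists_real_btwn.1 hε'
  exact ⟨ε, ENNReal.ofReal_pos.1 hε, fun s hs => hts (hε't (hs.trans hεε'))⟩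

open Classical in
lemma exists_pos_forall_integral_sub_lt_integral_piecewise {f g : X → ℝ} (hf : Integrable f ν)
    (hg : Integrable g ν) {η : ℝ} (hη : 0 < η) :
    ∃ ε : ℝ, 0 < ε ∧ ∀ A, MeasurableSet A → ν Aᶜ < ENNReal.ofReal ε →
      ∫ x, f x ∂ν - η < ∫ x, A.piecewise f g x ∂ν := by
  obtain ⟨ε, hε, hsmall⟩ := Integrable.exists_pos_forall_setIntegral_lt (hf.sub hg) hη
  refine ⟨ε, hε, fun A hA hAε => ?_⟩
  have hloss : ∫ x in Aᶜ, (f x - g x) ∂ν < η := hsmall Aᶜ hAε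
  rw [integral_sub hf.integrableOn hg.integrableOn] at hloss
  rw [integral_piecewise hA hf.integrableOn hg.integrableOn, ← integral_add_compl hA hf]
  linarith

lemma memLp_top_of_pos_of_le {c : X → ℝ} (hc : Measurable c) (hpos : ∀ x, 0 < c x) {M : ℝ}
    (hM : ∀ x, c x ≤ M) : MemLp c ∞ ν :=
  memLp_top_of_bound hc.aestronglyMeasurable M
    (Eventually.of_forall fun x => (Real.norm_of_nonneg (hpos x).le).trans_le (hM x))

end Integrability

section Utility

variable {X : Type*} [MeasurableSpace X] {ν : Measure X} {U : X → ℝ → ℝ} {c : X → ℝ}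

lemma utilityFunctional_eq_bot (hneg : ∫⁻ x, ENNReal.ofReal (-U x (c x)) ∂ν = ∞) :
    utilityFunctional ν U c = ⊥ := by
  rw [utilityFunctional, hneg, EReal.coe_ennreal_top, EReal.sub_top]

lemma utilityFunctional_eq_integral (h : Integrable (fun x => U x (c x)) ν) :
    utilityFunctional ν U c = ((∫ x, U x (c x) ∂ν : ℝ) : EReal) := by
  have hneg : ∫⁻ x, ENNReal.ofReal (-U x (c x)) ∂ν ≠ ∞ := h.neg.lintegral_lt_top.ne
  rw [utilityFunctional, integral_eq_lintegral_pos_part_sub_lintegral_neg_part h, EReal.coe_sub,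
    EReal.coe_ennreal_toReal h.lintegral_lt_top.ne, EReal.coe_ennreal_toReal hneg]

lemma utilityFunctional_eq_bot_or_eq_top_or_integrable
    (hm : AEMeasurable (fun x => U x (c x)) ν) :
    utilityFunctional ν U c = ⊥ ∨ utilityFunctional ν U c = ⊤ ∨
      Integrable (fun x => U x (c x)) ν := by
  by_cases hneg : ∫⁻ x, ENNReal.ofReal (-U x (c x)) ∂ν = ∞
  · exact Or.inl (utilityFunctional_eq_bot hneg)
  by_cases hpos : ∫⁻ x, ENNReal.ofReal (U x (c x)) ∂ν = ∞
  · refine Or.inr (Or.inl ?_)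
    rw [utilityFunctional, hpos, EReal.coe_ennreal_top, ← EReal.coe_ennreal_toReal hneg,
      EReal.top_sub_coe]
  · exact Or.inr (Or.inr (integrable_of_lintegral_ofReal_ne_top hm hpos hneg))

lemma integrable_of_le_of_utilityFunctional_ne_bot {c' : X → ℝ}
    (hc : Integrable (fun x => U x (c x)) ν) (hm : AEMeasurable (fun x => U x (c' x)) ν)
    (hle : ∀ x, U x (c' x) ≤ U x (c x)) (hne : utilityFunctional ν U c' ≠ ⊥) :
    Integrable (fun x => U x (c' x)) ν :=
  integrable_of_lintegral_ofReal_ne_top hm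
    (ne_top_of_le_ne_top hc.lintegral_lt_top.ne
      (lintegral_mono fun x => ENNReal.ofReal_le_ofReal (hle x)))
    (fun hneg => hne (utilityFunctional_eq_bot hneg))

end Utility

lemma ContinuousLinearMap.map_eq_of_ae_eq_on_compl {X : Type*} [MeasurableSpace X]
    {ν : Measure X} {E F : Type*} [NormedAddCommGroup E] [NormedSpace ℝ E]
    [NormedAddCommGroup F] [NormedSpace ℝ F] {p : ℝ≥0∞} [Fact (1 ≤ p)]
    {Λs : Lp E p ν →L[ℝ] F} {A : Set X}
    (hA : ∀ f g : Lp E p ν, (g : X → E) =ᵐ[ν] (fun x => A.indicator (fun y => f y) x) →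
      Λs g = 0)
    {f g : Lp E p ν} (hfg : ∀ᵐ x ∂ν, x ∉ A → f x = g x) : Λs f = Λs g := by
  rw [← sub_eq_zero, ← map_sub]
  refine hA (f - g) (f - g) ?_
  filter_upwards [Lp.coeFn_sub f g, hfg] with x hsub hx
  by_cases h : x ∈ A
  · rw [Set.indicator_of_mem h]
  · rw [Set.indicator_of_notMem h, hsub, Pi.sub_apply, hx h, sub_self]

lemma EReal.coe_le_sSup_of_forall_exists_sub_le {S : Set EReal} {r : ℝ}
    (h : ∀ η : ℝ, 0 < η → ∃ z ∈ S, ((r - η : ℝ) : EReal) ≤ z) : (r : EReal) ≤ sSup S := by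
  refine EReal.ge_of_forall_gt_iff_ge.1 fun z hz => ?_
  obtain ⟨w, hw, hzw⟩ := h (r - z) (_root_.sub_pos.2 (EReal.coe_lt_coe_iff.1 hz))
  rw [sub_sub_cancel] at hzw
  exact le_sSup_of_le hw hzw

lemma exists_pos_lt_one_mul_le (s : ℝ) {η : ℝ} (hη : 0 < η) :
    ∃ δ : ℝ, 0 < δ ∧ δ < 1 ∧ δ * s ≤ η := by
  obtain ⟨δ₀, hδ₀, hδ₀s⟩ := exists_pos_mul_lt hη |s|
  have hδ : 0 < min δ₀ (1 / 2) := lt_min hδ₀ one_half_pos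
  refine ⟨min δ₀ (1 / 2), hδ, (min_le_right _ _).trans_lt (by norm_num), ?_⟩
  calc min δ₀ (1 / 2) * s ≤ min δ₀ (1 / 2) * |s| := mul_le_mul_of_nonneg_left (le_abs_self s) hδ.le
    _ ≤ δ₀ * |s| := mul_le_mul_of_nonneg_right (min_le_left _ _) (abs_nonneg s)
    _ ≤ η := by linarith

lemma apply_le_integral_mul_add_of_le_of_eq_mul_off {X : Type*} [MeasurableSpace X]
    {ν : Measure X} (Λ Λs : Lp ℝ ∞ ν →L[ℝ] ℝ) {Y : X → ℝ} (hY_int : Integrable Y ν)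
    (hY_nonneg : ∀ x, 0 ≤ Y x) (h_decomp : ∀ f : Lp ℝ ∞ ν, Λ f = (∫ x, f x * Y x ∂ν) + Λs f)
    {A : Set X}
    (hΛs_A : ∀ f g : Lp ℝ ∞ ν, (g : X → ℝ) =ᵐ[ν] (fun x => A.indicator (fun y => f y) x) →
      Λs g = 0)
    {c d : X → ℝ} (hc : MemLp c ∞ ν) (hd : MemLp d ∞ ν) (hdc : ∀ x, d x ≤ c x) {δ : ℝ}
    (hd_off : ∀ x ∉ A, d x = δ * c x) {cL dL : Lp ℝ ∞ ν} (hcL : (cL : X → ℝ) =ᵐ[ν] c)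
    (hdL : (dL : X → ℝ) =ᵐ[ν] d) :
    Λ dL ≤ ∫ x, c x * Y x ∂ν + δ * Λs cL := by
  have hΛs_dL : Λs dL = δ * Λs cL := by
    rw [← smul_eq_mul, ← map_smul]
    refine Λs.map_eq_of_ae_eq_on_compl hΛs_A ?_
    filter_upwards [hdL, hcL, Lp.coeFn_smul δ cL] with x hdx hcx hsx hx
    rw [hdx, hsx, Pi.smul_apply, hcx, hd_off x hx, smul_eq_mul]
  have hΛr_dL : ∫ x, dL x * Y x ∂ν ≤ ∫ x, c x * Y x ∂ν := by
    rw [integral_congr_ae (hdL.mono fun x hx => congrArg (· * Y x) hx)]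
    exact integral_mono (hY_int.smul_of_top_right hd) (hY_int.smul_of_top_right hc)
      fun x => mul_le_mul_of_nonneg_right (hdc x) (hY_nonneg x)
  rw [h_decomp, hΛs_dL]
  linarith

lemma exists_utilityFunctional_sub_ge_of_integrable {X : Type*} [MeasurableSpace X]
    {ν : Measure X} {U : X → ℝ → ℝ} (hU_meas : Measurable (Function.uncurry U))
    (hU_mono : ∀ x, MonotoneOn (U x) (Set.Ioi 0))
    (h_delta : ∀ c : X → ℝ, Measurable c → (∀ x, 0 < c x) →
      utilityFunctional ν U c ≠ ⊥ → ∀ δ : ℝ, 0 < δ → δ < 1 →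
      utilityFunctional ν U (fun x => δ * c x) ≠ ⊥)
    (Λ Λs : Lp ℝ ∞ ν →L[ℝ] ℝ) {Y : X → ℝ} (hY_int : Integrable Y ν) (hY_nonneg : ∀ x, 0 ≤ Y x)
    (h_decomp : ∀ f : Lp ℝ ∞ ν, Λ f = (∫ x, f x * Y x ∂ν) + Λs f)
    (hΛs_sing : ∀ ε : ℝ, 0 < ε → ∃ A : Set X, MeasurableSet A ∧ ν Aᶜ < ENNReal.ofReal ε ∧
      ∀ f g : Lp ℝ ∞ ν, (g : X → ℝ) =ᵐ[ν] (fun x => A.indicator (fun y => f y) x) → Λs g = 0)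
    {c : X → ℝ} (hc : Measurable c) (hpos : ∀ x, 0 < c x) {M : ℝ} (hM : ∀ x, c x ≤ M)
    (hUc : Integrable (fun x => U x (c x)) ν) {η : ℝ} (hη : 0 < η) :
    ∃ (d : X → ℝ) (dL : Lp ℝ ∞ ν), Measurable d ∧ (∀ x, 0 < d x) ∧ (∃ M : ℝ, ∀ x, d x ≤ M) ∧
      (dL : X → ℝ) =ᵐ[ν] d ∧
      (((∫ x, U x (c x) ∂ν) - (∫ x, c x * Y x ∂ν) - η : ℝ) : EReal) ≤
        utilityFunctional ν U d - ((Λ dL : ℝ) : EReal) := by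
  classical
  have hc_mem : MemLp c ∞ ν := memLp_top_of_pos_of_le hc hpos hM
  obtain ⟨cL, hcL⟩ : ∃ cL : Lp ℝ ∞ ν, (cL : X → ℝ) =ᵐ[ν] c := ⟨_, hc_mem.coeFn_toLp⟩
  obtain ⟨δ, hδ, hδ_lt_one, hδ_small⟩ := exists_pos_lt_one_mul_le (Λs cL) (half_pos hη)
  have hδc_le : ∀ x, δ * c x ≤ c x := fun x => mul_le_of_le_one_left (hpos x).le hδ_lt_one.le
  have hUδc : Integrable (fun x => U x (δ * c x)) ν :=
    integrable_of_le_of_utilityFunctional_ne_bot hUc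
      (hU_meas.comp (measurable_id.prodMk (hc.const_mul δ))).aemeasurable
      (fun x => hU_mono x (mul_pos hδ (hpos x)) (hpos x) (hδc_le x))
      (h_delta c hc hpos (utilityFunctional_eq_integral hUc ▸ EReal.coe_ne_bot _) δ hδ hδ_lt_one)
  obtain ⟨ε, hε, hU_patch⟩ :=
    exists_pos_forall_integral_sub_lt_integral_piecewise hUc hUδc (half_pos hη)
  obtain ⟨A, hA, hAε, hΛs_A⟩ := hΛs_sing ε hε
  set d := A.piecewise c (fun x => δ * c x)
  have hd : Measurable d := hc.piecewise hA (hc.const_mul δ)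
  have hd_pos : ∀ x, 0 < d x := fun x => by
    by_cases h : x ∈ A <;> simp [d, h, hpos, mul_pos hδ]
  have hd_le : ∀ x, d x ≤ c x := fun x => by
    by_cases h : x ∈ A <;> simp [d, h, hδc_le]
  have hd_mem : MemLp d ∞ ν := memLp_top_of_pos_of_le hd hd_pos fun x => (hd_le x).trans (hM x)
  obtain ⟨dL, hdL⟩ : ∃ dL : Lp ℝ ∞ ν, (dL : X → ℝ) =ᵐ[ν] d := ⟨_, hd_mem.coeFn_toLp⟩
  have hUd : (fun x => U x (d x)) = A.piecewise (fun x => U x (c x)) (fun x => U x (δ * c x)) :=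
    funext fun x => Set.apply_piecewise _ _ _ (fun x => U x)
  have hUd_int : Integrable (fun x => U x (d x)) ν :=
    hUd ▸ Integrable.piecewise hA hUc.integrableOn hUδc.integrableOn
  have hΛ_dL := apply_le_integral_mul_add_of_le_of_eq_mul_off Λ Λs hY_int hY_nonneg h_decomp
    hΛs_A hc_mem hd_mem hd_le (fun x hx => Set.piecewise_eq_of_notMem _ _ _ hx) hcL hdL
  refine ⟨d, dL, hd, hd_pos, ⟨M, fun x => (hd_le x).trans (hM x)⟩, hdL, ?_⟩
  rw [utilityFunctional_eq_integral hUd_int, ← EReal.coe_sub, EReal.coe_le_coe_iff, hUd]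
  linarith [hU_patch A hA hAε]

theorem conjugate_eq_conjugate_of_regular_part_general
    {X : Type*} [MeasurableSpace X] (ν : Measure X)
    (U : X → ℝ → ℝ)
    (hU_meas : Measurable (Function.uncurry U))
    (hU_mono : ∀ x, StrictMonoOn (U x) (Set.Ioi 0))
    -- Assumption 2.3 of the paper
    (h_delta : ∀ c : X → ℝ, Measurable c → (∀ x, 0 < c x) →
      utilityFunctional ν U c ≠ ⊥ → ∀ δ : ℝ, 0 < δ → δ < 1 →
      utilityFunctional ν U (fun x => δ * c x) ≠ ⊥)
    -- the positive functional `Λ` and its decomposition `Λ = Λ_r + Λ_s`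
    (Λ Λs : Lp ℝ ⊤ ν →L[ℝ] ℝ)
    (Y : X → ℝ) (hY_int : Integrable Y ν) (hY_nonneg : ∀ x, 0 ≤ Y x)
    (h_decomp : ∀ f : Lp ℝ ⊤ ν, Λ f = (∫ x, f x * Y x ∂ν) + Λs f)
    (hΛs_pos : ∀ f : Lp ℝ ⊤ ν, (∀ᵐ x ∂ν, 0 ≤ f x) → 0 ≤ Λs f)
    (hΛs_sing : ∀ ε : ℝ, 0 < ε → ∃ A : Set X, MeasurableSet A ∧ ν Aᶜ < ENNReal.ofReal ε ∧
      ∀ f g : Lp ℝ ⊤ ν, (g : X → ℝ) =ᵐ[ν] (fun x => A.indicator (fun y => f y) x) → Λs g = 0) :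
    sSup {z : EReal | ∃ (c : X → ℝ) (cL : Lp ℝ ⊤ ν),
        Measurable c ∧ (∀ x, 0 < c x) ∧ (∃ M : ℝ, ∀ x, c x ≤ M) ∧
        (cL : X → ℝ) =ᵐ[ν] c ∧
        z = utilityFunctional ν U c - ((Λ cL : ℝ) : EReal)}
      = sSup {z : EReal | ∃ c : X → ℝ,
        Measurable c ∧ (∀ x, 0 < c x) ∧ (∃ M : ℝ, ∀ x, c x ≤ M) ∧
        z = utilityFunctional ν U c - ((∫ x, c x * Y x ∂ν : ℝ) : EReal)} := by
  apply le_antisymm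
  · refine sSup_le ?_
    rintro _ ⟨c, cL, hc, hpos, hbdd, hcL, rfl⟩
    refine le_sSup_of_le ⟨c, hc, hpos, hbdd, rfl⟩ (EReal.sub_le_sub le_rfl ?_)
    have hΛs_cL : 0 ≤ Λs cL := hΛs_pos cL (hcL.mono fun x hx => hx ▸ (hpos x).le)
    have hΛr_cL : ∫ x, cL x * Y x ∂ν = ∫ x, c x * Y x ∂ν :=
      integral_congr_ae (hcL.mono fun x hx => congrArg (· * Y x) hx)
    exact EReal.coe_le_coe_iff.2 (by linarith [h_decomp cL])
  · refine sSup_le ?_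
    rintro _ ⟨c, hc, hpos, ⟨M, hM⟩, rfl⟩
    have hc_mem : MemLp c ⊤ ν := memLp_top_of_pos_of_le hc hpos hM
    have hUc_meas : Measurable fun x => U x (c x) := hU_meas.comp (measurable_id.prodMk hc)
    rcases utilityFunctional_eq_bot_or_eq_top_or_integrable (hUc_meas.aemeasurable (μ := ν))
      with hbot | htop | hUc
    · simp [hbot]
    · exact le_sSup_of_le ⟨c, _, hc, hpos, ⟨M, hM⟩, hc_mem.coeFn_toLp, rfl⟩ (by simp [htop])
    · rw [utilityFunctional_eq_integral hUc, ← EReal.coe_sub]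
      refine EReal.coe_le_sSup_of_forall_exists_sub_le fun η hη => ?_
      obtain ⟨d, dL, hd, hd_pos, hd_bdd, hdL, hle⟩ :=
        exists_utilityFunctional_sub_ge_of_integrable hU_meas (fun x => (hU_mono x).monotoneOn)
          h_delta Λ Λs hY_int hY_nonneg h_decomp hΛs_sing hc hpos hM hUc hη
      exact ⟨_, ⟨d, dL, hd, hd_pos, hd_bdd, hdL, rfl⟩, hle⟩

/-- Second assertion of Proposition 4.1, in abstract form: if a positive continuous linear
functional `Λ` on `L∞(ν)` decomposes as `Λ = Λ_r + Λ_s`, where `Λ_r(f) = ∫ f·Y dν` for a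
`ν`-integrable `Y ≥ 0` and `Λ_s` is positive and singular (it vanishes on sets of almost
full measure), then `sup_c (𝐔(c) − Λ(c)) = sup_c (𝐔(c) − Λ_r(c))`, both suprema being over
bounded measurable functions `c : X → (0,∞)`. -/
theorem conjugate_eq_conjugate_of_regular_part
    {X : Type*} [MeasurableSpace X] (ν : Measure X) [IsProbabilityMeasure ν]
    (U U' : X → ℝ → ℝ) (K₂ : ℝ → ℝ) (G : ℝ)
    (hU_meas : Measurable (Function.uncurry U))
    (hU_concave : ∀ x, StrictConcaveOn ℝ (Set.Ioi 0) (U x))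
    (hU_mono : ∀ x, StrictMonoOn (U x) (Set.Ioi 0))
    (hU_deriv : ∀ x, ∀ c ∈ Set.Ioi (0 : ℝ), HasDerivAt (U x) (U' x c) c)
    (hU'_cont : ∀ x, ContinuousOn (U' x) (Set.Ioi 0))
    (hK₂_cont : ContinuousOn K₂ (Set.Ioi 0))
    (hK₂_anti : StrictAntiOn K₂ (Set.Ioi 0))
    (hK₂_pos : ∀ c ∈ Set.Ioi (0 : ℝ), 0 < K₂ c)
    (hU'_le : ∀ x, ∀ c ∈ Set.Ioi (0 : ℝ), U' x c ≤ K₂ c)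
    (hG : ∀ x, G ≤ U x 1)
    -- Assumption 2.3 of the paper
    (h_delta : ∀ c : X → ℝ, Measurable c → (∀ x, 0 < c x) →
      utilityFunctional ν U c ≠ ⊥ → ∀ δ : ℝ, 0 < δ → δ < 1 →
      utilityFunctional ν U (fun x => δ * c x) ≠ ⊥)
    -- the positive functional `Λ` and its decomposition `Λ = Λ_r + Λ_s`
    (Λ Λs : Lp ℝ ⊤ ν →L[ℝ] ℝ)
    (hΛ_pos : ∀ f : Lp ℝ ⊤ ν, (∀ᵐ x ∂ν, 0 ≤ f x) → 0 ≤ Λ f)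
    (Y : X → ℝ) (hY_int : Integrable Y ν) (hY_nonneg : ∀ x, 0 ≤ Y x)
    (h_decomp : ∀ f : Lp ℝ ⊤ ν, Λ f = (∫ x, f x * Y x ∂ν) + Λs f)
    (hΛs_pos : ∀ f : Lp ℝ ⊤ ν, (∀ᵐ x ∂ν, 0 ≤ f x) → 0 ≤ Λs f)
    (hΛs_sing : ∀ ε : ℝ, 0 < ε → ∃ A : Set X, MeasurableSet A ∧ ν Aᶜ < ENNReal.ofReal ε ∧
      ∀ f g : Lp ℝ ⊤ ν, (g : X → ℝ) =ᵐ[ν] (fun x => A.indicator (fun y => f y) x) → Λs g = 0) :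
    sSup {z : EReal | ∃ (c : X → ℝ) (cL : Lp ℝ ⊤ ν),
        Measurable c ∧ (∀ x, 0 < c x) ∧ (∃ M : ℝ, ∀ x, c x ≤ M) ∧
        (cL : X → ℝ) =ᵐ[ν] c ∧
        z = utilityFunctional ν U c - ((Λ cL : ℝ) : EReal)}
      = sSup {z : EReal | ∃ c : X → ℝ,
        Measurable c ∧ (∀ x, 0 < c x) ∧ (∃ M : ℝ, ∀ x, c x ≤ M) ∧
        z = utilityFunctional ν U c - ((∫ x, c x * Y x ∂ν : ℝ) : EReal)} :=
  conjugate_eq_conjugate_of_regular_part_general ν U hU_meas hU_mono h_delta Λ Λs Y hY_int hY_nonneg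
    h_decomp hΛs_pos hΛs_sing
end

section
/- Suppose β > 0 and there exists a constant ψ > 0 such that E[ e^{−β τ_u} 1_{{τ_u < ∞}} ] = e^{−u ψ} for all u ≥ 0. Then for every a > 0, E[ ∫_{(0, τ_a]} e^{−β t} dκ_t ] = (1 − e^{−a ψ}) / ψ, where for each ω the inner integral is taken over (0, τ_a(ω)] ∩ [0,∞) with respect to the Lebesgue–Stieltjes measure induced by the path t ↦ κ_t(ω) (the integral over all of (0,∞) when τ_a(ω) = ∞). -/
/-!
Let `E` be exponential of rate `β`, so that `e^{-βt} = P(E > t)`. Writing `(0, τ_a]` as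
`{t > 0 | κ_t ≤ a}`, Tonelli gives pathwise
`∫_{(0,τ_a]} e^{-βt} dκ_t = E[κ((0, τ_a] ∩ (0, E))] = E[min(κ_E, a)] = ∫_0^a P(κ_E > u) du`,
and `P(κ_E > u) = P(E > τ_u) = e^{-βτ_u} 1_{τ_u < ∞}`. Taking expectations and exchanging them
with `du`, the Laplace transform hypothesis leaves `∫_0^a e^{-uψ} du = (1 - e^{-aψ}) / ψ`.
-/

open MeasureTheory ProbabilityTheory Set Filter
open scoped ENNReal Topology

lemma expMeasure_Ioi {r t : ℝ} (hr : 0 < r) (ht : 0 ≤ t) :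
    expMeasure r (Ioi t) = ENNReal.ofReal (Real.exp (-r * t)) := by
  have := isProbabilityMeasure_expMeasure hr
  rw [← measure_cdf (expMeasure r), StieltjesFunction.measure_Ioi _ (tendsto_cdf_atTop _),
    cdf_expMeasure_eq hr, if_pos ht, neg_mul, sub_sub_cancel]

lemma expMeasure_setOf_lt_ofReal {r : ℝ} (hr : 0 < r) (T : ℝ≥0∞) :
    expMeasure r {s | T < ENNReal.ofReal s} =
      if T < ⊤ then ENNReal.ofReal (Real.exp (-r * T.toReal)) else 0 := by
  split_ifs with hT
  · have hset : {s | T < ENNReal.ofReal s} = Ioi T.toReal := by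
      ext s
      exact ENNReal.lt_ofReal_iff_toReal_lt hT.ne
    rw [hset, expMeasure_Ioi hr ENNReal.toReal_nonneg]
  · simp [not_lt_top_iff.mp hT]

lemma lintegral_Ico_exp_neg_mul {ψ a : ℝ} (hψ : 0 < ψ) (ha : 0 ≤ a) :
    ∫⁻ u in Ico 0 a, ENNReal.ofReal (Real.exp (-u * ψ)) =
      ENNReal.ofReal ((1 - Real.exp (-a * ψ)) / ψ) := by
  rw [← ofReal_integral_eq_lintegral_ofReal, integral_Ico_eq_integral_Ioc,
    ← intervalIntegral.integral_of_le ha]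
  · simp only [neg_mul]
    rw [intervalIntegral.integral_comp_mul_right (fun x => Real.exp (-x)) hψ.ne']
    simp [integral_exp, inv_mul_eq_div]
  · exact (Real.continuous_exp.comp (by fun_prop)).integrableOn_Icc.mono_set Ico_subset_Icc_self
  · exact Eventually.of_forall fun _ => (Real.exp_pos _).le

lemma lintegral_measure_Iio_comp {μ ν : Measure ℝ} [SFinite μ] [SFinite ν] {f : ℝ → ℝ}
    (hf : Measurable f) :
    ∫⁻ x, ν (Iio (f x)) ∂μ = ∫⁻ y, μ {x | y < f x} ∂ν := by
  have hE : MeasurableSet {p : ℝ × ℝ | p.2 < f p.1} :=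
    measurableSet_lt measurable_snd (hf.comp measurable_fst)
  exact (Measure.prod_apply hE).symm.trans (Measure.prod_apply_symm hE)

lemma StieltjesFunction.measure_Ioo_inter_preimage_Iic (f : StieltjesFunction ℝ)
    (hf : Continuous f) {x y a : ℝ} (hxa : f x ≤ a) :
    f.measure (Ioo x y ∩ f ⁻¹' Iic a) = ENNReal.ofReal (min (f y) a - f x) := by
  rcases le_or_gt (f y) a with hya | hay
  · have hset : Ioo x y ∩ f ⁻¹' Iic a = Ioo x y :=
      inter_eq_left.mpr fun t ht => (f.mono ht.2.le).trans hya
    rw [hset, f.measure_Ioo, hf.continuousWithinAt.leftLim_eq, min_eq_left hya]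
  · have hxy : x ≤ y := f.mono.reflect_lt (hxa.trans_lt hay) |>.le
    -- `c` is the last point of `[x, y]` where `f ≤ a`; by the intermediate value theorem `f c = a`
    obtain ⟨c, ⟨⟨hxc, hcy⟩, hca⟩, hc_max⟩ := (isCompact_Icc.inter_right
      (isClosed_Iic.preimage hf)).exists_isGreatest ⟨x, ⟨le_rfl, hxy⟩, hxa⟩
    obtain ⟨d, ⟨hcd, hdy⟩, hda⟩ :=
      intermediate_value_Icc hcy hf.continuousOn ⟨hca, hay.le⟩
    have hdc : d ≤ c := hc_max ⟨⟨hxc.trans hcd, hdy⟩, hda.le⟩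
    have hfc : f c = a := le_antisymm hdc hcd ▸ hda
    have hcy' : c < y := lt_of_le_of_ne hcy fun h => hay.ne' (h ▸ hfc)
    have hset : Ioo x y ∩ f ⁻¹' Iic a = Ioc x c := by
      ext t
      refine ⟨fun ⟨⟨hxt, hty⟩, hta⟩ => ⟨hxt, hc_max ⟨⟨hxt.le, hty.le⟩, hta⟩⟩,
        fun ⟨hxt, htc⟩ => ⟨⟨hxt, htc.trans_lt hcy'⟩, (f.mono htc).trans hfc.le⟩⟩
    rw [hset, f.measure_Ioc, hfc, min_eq_right hay.le]

noncomputable def passageTime (κ : ℝ → ℝ) (u : ℝ) : ℝ≥0∞ :=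
  sInf {s | ∃ t : ℝ, 0 < t ∧ s = ENNReal.ofReal t ∧ u < κ t}

lemma passageTime_lt_ofReal_iff {κ : ℝ → ℝ} (hmono : Monotone κ) (hcont : Continuous κ)
    {u s : ℝ} (hs : 0 < s) : passageTime κ u < ENNReal.ofReal s ↔ u < κ s := by
  constructor
  · intro h
    obtain ⟨_, ⟨t, -, rfl, hut⟩, hts⟩ := sInf_lt_iff.mp h
    exact hut.trans_le (hmono ((ENNReal.ofReal_lt_ofReal_iff hs).mp hts).le)
  · intro h
    have hnear : ∀ᶠ t in 𝓝[<] s, t ∈ Ioo 0 s ∧ u < κ t := Filter.Eventually.and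
      (Ioo_mem_nhdsLT hs) (hcont.continuousWithinAt.eventually (lt_mem_nhds h))
    obtain ⟨t, ⟨ht0, hts⟩, hut⟩ := hnear.exists
    have hmem : ENNReal.ofReal t ∈ {s | ∃ t : ℝ, 0 < t ∧ s = ENNReal.ofReal t ∧ u < κ t} :=
      ⟨t, ht0, rfl, hut⟩
    exact (sInf_le hmem).trans_lt ((ENNReal.ofReal_lt_ofReal_iff hs).mpr hts)

lemma setOf_lt_eq_setOf_passageTime_lt {κ : ℝ → ℝ} (hmono : Monotone κ) (hcont : Continuous κ)
    {u : ℝ} (hu : κ 0 ≤ u) : {s | u < κ s} = {s | passageTime κ u < ENNReal.ofReal s} := by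
  ext s
  rcases lt_or_ge 0 s with hs | hs
  · exact (passageTime_lt_ofReal_iff hmono hcont hs).symm
  · simp only [mem_ofPred_eq, ENNReal.ofReal_of_nonpos hs, ENNReal.not_lt_zero, iff_false, not_lt]
    exact (hmono hs).trans hu

lemma setOf_ofReal_le_passageTime {κ : ℝ → ℝ} (hmono : Monotone κ) (hcont : Continuous κ)
    (a : ℝ) : {t : ℝ | 0 < t ∧ ENNReal.ofReal t ≤ passageTime κ a} = Ioi 0 ∩ κ ⁻¹' Iic a := by
  ext t
  simp only [mem_ofPred_eq, mem_inter_iff, mem_Ioi, mem_preimage, mem_Iic, ← not_lt]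
  exact and_congr_right fun ht => not_congr (passageTime_lt_ofReal_iff hmono hcont ht)

lemma measurable_uncurry_of_measurable_passageTime {Ω : Type*} [MeasurableSpace Ω]
    {κ : Ω → ℝ → ℝ} (hmono : ∀ ω, Monotone (κ ω)) (hcont : ∀ ω, Continuous (κ ω))
    (hzero : ∀ ω, ∀ t ≤ 0, κ ω t = 0) (hτ : ∀ u, Measurable fun ω => passageTime (κ ω) u) :
    Measurable (Function.uncurry κ) := by
  have hslice : ∀ s, Measurable fun ω => κ ω s := by
    intro s
    rcases lt_or_ge 0 s with hs | hs
    · refine measurable_of_Ioi fun u => ?_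
      have hpre : (fun ω => κ ω s) ⁻¹' Ioi u = (fun ω => passageTime (κ ω) u) ⁻¹'
          Iio (ENNReal.ofReal s) := by
        ext ω
        exact (passageTime_lt_ofReal_iff (hmono ω) (hcont ω) hs).symm
      rw [hpre]
      exact hτ u measurableSet_Iio
    · simp only [hzero _ s hs, measurable_const]
  exact (measurable_uncurry_of_continuous_of_measurable (u := fun s ω => κ ω s) hcont
    hslice).comp measurable_swap

lemma StieltjesFunction.lintegral_exp_neg_eq_lintegral_expMeasure (κ : StieltjesFunction ℝ)
    (hκ : Continuous κ) (hκ0 : κ 0 = 0) {β a : ℝ} (hβ : 0 < β) (ha : 0 ≤ a) :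
    ∫⁻ t in Ioi 0 ∩ κ ⁻¹' Iic a, ENNReal.ofReal (Real.exp (-β * t)) ∂κ.measure =
      ∫⁻ u in Ico 0 a, expMeasure β {s | u < κ s} := by
  have := isProbabilityMeasure_expMeasure hβ
  have hA : MeasurableSet (Ioi 0 ∩ κ ⁻¹' Iic a) :=
    _root_.measurableSet_Ioi.inter (hκ.measurable measurableSet_Iic)
  calc ∫⁻ t in Ioi 0 ∩ κ ⁻¹' Iic a, ENNReal.ofReal (Real.exp (-β * t)) ∂κ.measure
      = ∫⁻ t in Ioi 0 ∩ κ ⁻¹' Iic a, expMeasure β (Ioi t) ∂κ.measure :=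
        setLIntegral_congr_fun hA fun t ht => (expMeasure_Ioi hβ ht.1.le).symm
    _ = ∫⁻ s, κ.measure.restrict (Ioi 0 ∩ κ ⁻¹' Iic a) (Iio s) ∂expMeasure β :=
        (lintegral_measure_Iio_comp measurable_id).symm
    _ = ∫⁻ s, volume.restrict (Ico 0 a) (Iio (κ s)) ∂expMeasure β := by
        refine lintegral_congr fun s => ?_
        rw [Measure.restrict_apply measurableSet_Iio, Measure.restrict_apply measurableSet_Iio,
          inter_left_comm, ← inter_assoc, Ioi_inter_Iio,
          κ.measure_Ioo_inter_preimage_Iic hκ (hκ0.trans_le ha), hκ0, inter_comm,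
          Ico_inter_Iio, Real.volume_Ico, min_comm]
    _ = ∫⁻ u in Ico 0 a, expMeasure β {s | u < κ s} :=
        lintegral_measure_Iio_comp hκ.measurable

/-- The change-of-variables computation (equation (5.17) of the paper): if `κ` is a
continuous nondecreasing process started at `0`, with right-continuous inverse
`τ_u = inf{t > 0 : κ_t > u}`, and `E[e^{−βτ_u} 1_{τ_u<∞}] = e^{−uψ}` for all `u ≥ 0`
(for some constants `β, ψ > 0`), then for every `a > 0`,
`E[∫_{(0,τ_a]} e^{−βt} dκ_t] = (1 − e^{−aψ})/ψ`, the inner integral being taken with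
respect to the Lebesgue–Stieltjes measure of the path `t ↦ κ_t(ω)`. -/
theorem expected_discounted_clock_integral
    {Ω : Type*} [MeasurableSpace Ω] (P : Measure Ω) [IsProbabilityMeasure P]
    (κ : Ω → ℝ → ℝ)
    (hκ_mono : ∀ ω, Monotone (κ ω))
    (hκ_cont : ∀ ω, Continuous (κ ω))
    (hκ_zero : ∀ ω, ∀ t ≤ (0 : ℝ), κ ω t = 0)
    -- the generalized inverse `τ_u = inf{t > 0 : κ_t > u} ∈ [0,∞]`
    (τ : ℝ → Ω → ENNReal)
    (hτ : ∀ u ω, τ u ω =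
      sInf {s : ENNReal | ∃ t : ℝ, 0 < t ∧ s = ENNReal.ofReal t ∧ u < κ ω t})
    (hτ_meas : ∀ u, Measurable (τ u))
    (β ψ : ℝ) (hβ : 0 < β) (hψ : 0 < ψ)
    -- the Laplace transform assumption `E[e^{−βτ_u} 1_{τ_u < ∞}] = e^{−uψ}`
    (h_laplace : ∀ u : ℝ, 0 ≤ u →
      ∫⁻ ω, (if τ u ω < ⊤ then ENNReal.ofReal (Real.exp (-β * (τ u ω).toReal)) else 0) ∂P
        = ENNReal.ofReal (Real.exp (-u * ψ))) :
    ∀ a : ℝ, 0 < a →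
      ∫⁻ ω, (∫⁻ t in {t : ℝ | 0 < t ∧ ENNReal.ofReal t ≤ τ a ω},
          ENNReal.ofReal (Real.exp (-β * t))
          ∂((⟨κ ω, hκ_mono ω, fun x => (hκ_cont ω).continuousWithinAt⟩ :
              StieltjesFunction ℝ).measure)) ∂P
        = ENNReal.ofReal ((1 - Real.exp (-a * ψ)) / ψ) := by
  intro a ha
  have := isProbabilityMeasure_expMeasure hβ
  obtain rfl : τ = fun u ω => passageTime (κ ω) u := funext₂ hτ
  have hκ_meas := measurable_uncurry_of_measurable_passageTime hκ_mono hκ_cont hκ_zero hτ_meas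
  have hF_meas : Measurable fun p : Ω × ℝ => expMeasure β {s | p.2 < κ p.1 s} :=
    measurable_measure_prodMk_left (measurableSet_lt (measurable_snd.comp measurable_fst)
      (hκ_meas.comp ((measurable_fst.comp measurable_fst).prodMk measurable_snd)))
  calc _ = ∫⁻ ω, (∫⁻ u in Ico 0 a, expMeasure β {s | u < κ ω s}) ∂P := by
        refine lintegral_congr fun ω => ?_
        rw [setOf_ofReal_le_passageTime (hκ_mono ω) (hκ_cont ω)]
        exact StieltjesFunction.lintegral_exp_neg_eq_lintegral_expMeasure
          ⟨κ ω, hκ_mono ω, fun _ => (hκ_cont ω).continuousWithinAt⟩ (hκ_cont ω)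
          (hκ_zero ω 0 le_rfl) hβ ha.le
    _ = ∫⁻ u in Ico 0 a, ∫⁻ ω, expMeasure β {s | u < κ ω s} ∂P :=
        lintegral_lintegral_swap hF_meas.aemeasurable
    _ = ∫⁻ u in Ico 0 a, ENNReal.ofReal (Real.exp (-u * ψ)) := by
        refine setLIntegral_congr_fun measurableSet_Ico fun u hu => ?_
        rw [← h_laplace u hu.1]
        refine lintegral_congr fun ω => ?_
        rw [setOf_lt_eq_setOf_passageTime_lt (hκ_mono ω) (hκ_cont ω)
          ((hκ_zero ω 0 le_rfl).trans_le hu.1), expMeasure_setOf_lt_ofReal hβ]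
    _ = _ := lintegral_Ico_exp_neg_mul hψ ha.le
end
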